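/- arXiv:1206.0669 — 6 statements merged into one kernel-verified Lean document; each statement's English description precedes it below -/
import Mathlib

section
/- Let p and q be coprime positive integers and let S = {n : 0 < n < pq and n = qx + py for some integers x, y with 0 < x < p and 0 < y < q}. Then the sum of the elements of S equals pq(p-1)(q-1)/3 + (p-1)(q-1)(p+q+1)/12. -/
/-!
Each element of the set is `q * x + p * y` for exactly one lattice point `(x, y)` of the open
rectangle `(0, p) × (0, q)` below the line `q * x + p * y = p * q`; group these points by `x`. For `0 < x < p`, write `q * x = p * f + r` with
`0 < r < p`; then `q * x + p * y < p * q` exactly when `y < q - f`, so column `x` contributes an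
arithmetic progression, from `q * x + p` to `p * q - p + r`, whose sum is a quadratic expression in
`x` and `r` with no mixed term. Since `x ↦ q * x % p` permutes `{1, …, p - 1}`, the sums of `r` and
`r ^ 2` over the columns are the sums of `x` and `x ^ 2`, and only power sums remain.
-/

open Finset

lemma sum_Ioo_zero_eq_sum_range {M : Type*} [AddCommMonoid M] {f : ℕ → M} (hf : f 0 = 0)
    (n : ℕ) : ∑ i ∈ Ioo 0 n, f i = ∑ i ∈ range n, f i := by
  have hIoo : Ioo 0 n = (range n).erase 0 := by
    ext i
    simp only [mem_Ioo, mem_erase, mem_range]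
    omega
  rw [hIoo, sum_erase _ hf]

lemma sum_Ioo_zero_cast (n : ℕ) : ∑ i ∈ Ioo 0 n, (i : ℚ) = n * (n - 1) / 2 := by
  rw [sum_Ioo_zero_eq_sum_range Nat.cast_zero]
  induction n with
  | zero => simp
  | succ k ih => rw [sum_range_succ, ih]; push_cast; ring

lemma sum_Ioo_zero_cast_sq (n : ℕ) :
    ∑ i ∈ Ioo 0 n, (i : ℚ) ^ 2 = n * (n - 1) * (2 * n - 1) / 6 := by
  rw [sum_Ioo_zero_eq_sum_range (by simp)]
  induction n with
  | zero => simp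
  | succ k ih => rw [sum_range_succ, ih]; push_cast; ring

lemma cast_card_Ioo_zero {n : ℕ} (hn : 0 < n) : ((#(Ioo 0 n) : ℕ) : ℚ) = n - 1 := by
  rw [Nat.card_Ioo, Nat.sub_zero, Nat.cast_pred hn]

lemma sum_Ioo_zero_affine {n : ℕ} (hn : 0 < n) (a b : ℕ) :
    ∑ i ∈ Ioo 0 n, ((a + b * i : ℕ) : ℚ) = (n - 1) * a + b * (n * (n - 1) / 2) := by
  push_cast
  rw [sum_add_distrib, sum_const, nsmul_eq_mul, cast_card_Ioo_zero hn, ← mul_sum,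
    sum_Ioo_zero_cast]

section

variable {p q : ℕ}

lemma injOn_mul_mod (hpq : p.Coprime q) : Set.InjOn (fun x => q * x % p) (Set.Iio p) :=
  fun _ hx _ hy h => (Nat.ModEq.cancel_left_of_coprime hpq h).eq_of_lt_of_lt hx hy

lemma mul_mod_mem_Ioo (hpq : p.Coprime q) {x : ℕ} (hx : x ∈ Ioo 0 p) : q * x % p ∈ Ioo 0 p := by
  obtain ⟨hx0, hxp⟩ := mem_Ioo.1 hx
  refine mem_Ioo.2 ⟨Nat.pos_of_ne_zero fun h => hx0.ne' ?_, Nat.mod_lt _ (hx0.trans hxp)⟩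
  exact injOn_mul_mod hpq hxp (hx0.trans hxp) (by simpa using h)

lemma sum_Ioo_comp_mul_mod {M : Type*} [AddCommMonoid M] (hpq : p.Coprime q) (f : ℕ → M) :
    ∑ x ∈ Ioo 0 p, f (q * x % p) = ∑ t ∈ Ioo 0 p, f t := by
  have hinj : Set.InjOn (fun x => q * x % p) (Ioo 0 p : Set ℕ) :=
    (injOn_mul_mod hpq).mono fun x hx => (mem_Ioo.1 hx).2
  exact sum_nbij _ (fun _ => mul_mod_mem_Ioo hpq) hinj
    (surjOn_of_injOn_of_card_le _ (fun _ => mul_mod_mem_Ioo hpq) hinj le_rfl) fun _ _ => rfl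

lemma sum_Ioo_quadratic_mul_mod (hpq : p.Coprime q) (hp : 0 < p) (a b c d e : ℚ) :
    ∑ x ∈ Ioo 0 p, (a + b * (q * x % p : ℕ) + c * ((q * x % p : ℕ) : ℚ) ^ 2 + d * x +
        e * (x : ℚ) ^ 2) =
      (p - 1) * a + (b + d) * (p * (p - 1) / 2) + (c + e) * (p * (p - 1) * (2 * p - 1) / 6) := by
  simp only [sum_add_distrib, ← mul_sum, sum_const, nsmul_eq_mul, cast_card_Ioo_zero hp,
    sum_Ioo_comp_mul_mod hpq (fun t => (t : ℚ)), sum_Ioo_comp_mul_mod hpq (fun t => (t : ℚ) ^ 2),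
    sum_Ioo_zero_cast, sum_Ioo_zero_cast_sq]
  ring

open Classical in
lemma filter_exists_eq_image (hq : 0 < q) :
    (Ioo 0 (p * q)).filter
        (fun n => ∃ x y : ℕ, 0 < x ∧ x < p ∧ 0 < y ∧ y < q ∧ n = q * x + p * y) =
      ((Ioo 0 p ×ˢ Ioo 0 q).filter (fun z => q * z.1 + p * z.2 < p * q)).image
        (fun z => q * z.1 + p * z.2) := by
  ext n
  simp only [mem_filter, mem_Ioo, mem_image, mem_product, Prod.exists]
  constructor
  · rintro ⟨⟨-, hn⟩, x, y, hx0, hxp, hy0, hyq, rfl⟩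
    exact ⟨x, y, ⟨⟨⟨hx0, hxp⟩, hy0, hyq⟩, hn⟩, rfl⟩
  · rintro ⟨x, y, ⟨⟨⟨hx0, hxp⟩, hy0, hyq⟩, hn⟩, rfl⟩
    exact ⟨⟨by positivity, hn⟩, x, y, hx0, hxp, hy0, hyq, rfl⟩

lemma injOn_linear_form (hpq : p.Coprime q) (hp : 0 < p) :
    Set.InjOn (fun z : ℕ × ℕ => q * z.1 + p * z.2) {z | z.1 < p} := by
  rintro ⟨x₁, y₁⟩ hx₁ ⟨x₂, y₂⟩ hx₂ h
  simp only at h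
  obtain rfl : x₁ = x₂ := injOn_mul_mod hpq hx₁ hx₂ <| by
    simpa [Nat.add_mul_mod_self_left] using congrArg (· % p) h
  rw [Nat.eq_of_mul_eq_mul_left hp (Nat.add_left_cancel h)]

open Classical in
lemma sum_representable_eq_sum_columns (hpq : p.Coprime q) (hp : 0 < p) (hq : 0 < q) :
    ∑ n ∈ (Ioo 0 (p * q)).filter
        (fun n => ∃ x y : ℕ, 0 < x ∧ x < p ∧ 0 < y ∧ y < q ∧ n = q * x + p * y), (n : ℚ) =
      ∑ x ∈ Ioo 0 p, ∑ y ∈ (Ioo 0 q).filter (fun y => q * x + p * y < p * q),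
        ((q * x + p * y : ℕ) : ℚ) := by
  rw [filter_exists_eq_image hq, sum_image ((injOn_linear_form hpq hp).mono fun z hz =>
    (mem_Ioo.1 (mem_product.1 (mem_filter.1 hz).1).1).2)]
  exact sum_finset_product _ _ _ fun z => by simp only [mem_filter, mem_product, and_assoc]

lemma filter_Ioo_lt_eq_Ioo (hp : 0 < p) (x : ℕ) :
    (Ioo 0 q).filter (fun y => q * x + p * y < p * q) = Ioo 0 (q - q * x / p) := by
  ext y
  have hlt : q * x + p * y < p * q ↔ q * x / p < q - y := by
    rw [Nat.div_lt_iff_lt_mul hp, Nat.sub_mul, mul_comm q p, mul_comm y p]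
    omega
  simp only [mem_filter, mem_Ioo, hlt]
  generalize q * x / p = F
  omega

lemma sum_column_eq (hp : 0 < p) (hq : 0 < q) {x : ℕ} (hx : x < p) :
    ∑ y ∈ (Ioo 0 q).filter (fun y => q * x + p * y < p * q), ((q * x + p * y : ℕ) : ℚ) =
      (p * q - p + (q * x % p : ℕ) - q * x) * (p * q + (q * x % p : ℕ) + q * x) / (2 * p) := by
  have hF : q * x / p < q :=
    Nat.div_lt_of_lt_mul ((Nat.mul_lt_mul_of_pos_left hx hq).trans_eq (mul_comm _ _))
  have hdiv : (p : ℚ) * (q * x / p : ℕ) + (q * x % p : ℕ) = q * x := by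
    exact_mod_cast Nat.div_add_mod (q * x) p
  rw [filter_Ioo_lt_eq_Ioo hp, sum_Ioo_zero_affine (Nat.sub_pos_of_lt hF), Nat.cast_sub hF.le]
  generalize (q * x / p : ℕ) = F at *
  generalize (q * x % p : ℕ) = r at *
  push_cast
  rw [← hdiv]
  field_simp
  ring

end

open Classical in
theorem mordell_sum (p q : ℕ) (hp : 0 < p) (hq : 0 < q) (hpq : Nat.Coprime p q) :
    (∑ n ∈ (Finset.Ioo 0 (p * q)).filter
        (fun n => ∃ x y : ℕ, 0 < x ∧ x < p ∧ 0 < y ∧ y < q ∧ n = q * x + p * y),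
      (n : ℚ)) =
    (p : ℚ) * q * ((p : ℚ) - 1) * ((q : ℚ) - 1) / 3 +
      ((p : ℚ) - 1) * ((q : ℚ) - 1) * ((p : ℚ) + q + 1) / 12 := by
  rw [sum_representable_eq_sum_columns hpq hp hq,
    sum_congr rfl fun x hx => sum_column_eq hp hq (mem_Ioo.1 hx).2]
  have hp0 : (p : ℚ) ≠ 0 := by positivity
  calc _ = ∑ x ∈ Ioo 0 p, ((p * q - p) * (p * q) / (2 * p) +
          (2 * p * q - p) / (2 * p) * (q * x % p : ℕ) + 1 / (2 * p) * ((q * x % p : ℕ) : ℚ) ^ 2 +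
          -(p * q) / (2 * p) * x + -q ^ 2 / (2 * p) * (x : ℚ) ^ 2) :=
        sum_congr rfl fun x _ => by ring
    _ = _ := by
      rw [sum_Ioo_quadratic_mul_mod hpq hp]
      field_simp
      ring
end

section
/- Let p and q be coprime positive integers and let S = {n : 0 < n < pq and n = qx + py for some integers x, y with 0 < x < p and 0 < y < q}. Then the cardinality of S equals (p-1)(q-1)/2. -/
open Classical in
theorem card_S (p q : ℕ) (hp : 0 < p) (hq : 0 < q) (hpq : Nat.Coprime p q) :
    (((Finset.Ioo 0 (p * q)).filter
        (fun n => ∃ x y : ℕ, 0 < x ∧ x < p ∧ 0 < y ∧ y < q ∧ n = q * x + p * y)).card : ℚ) =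
      ((p : ℚ) - 1) * ((q : ℚ) - 1) / 2 := by
  haveI : NeZero p := ⟨hp.ne'⟩
  set T : Finset (ℕ × ℕ) := Finset.Ioo 0 p ×ˢ Finset.Ioo 0 q with hT
  set f : ℕ × ℕ → ℕ := fun z => q * z.1 + p * z.2 with hf
  have hmemT : ∀ z : ℕ × ℕ, z ∈ T ↔ (0 < z.1 ∧ z.1 < p) ∧ (0 < z.2 ∧ z.2 < q) := by
    intro z; simp [hT, Finset.mem_product]
  -- f never equals p*q on T
  have hne : ∀ z ∈ T, f z ≠ p * q := by
    rintro ⟨x, y⟩ hz h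
    rw [hmemT] at hz
    obtain ⟨⟨hx0, hxp⟩, hy0, hyq⟩ := hz
    have e2 : p * (q - y) + p * y = p * q := by
      rw [← Nat.mul_add, Nat.sub_add_cancel hyq.le]
    have h1 : q * x = p * (q - y) := by
      simp only [hf] at h; omega
    have hdvd : p ∣ x * q := by
      rw [mul_comm]; exact ⟨q - y, h1⟩
    have := Nat.le_of_dvd hx0 (hpq.dvd_of_dvd_mul_right hdvd)
    omega
  -- the involution
  set g : ℕ × ℕ → ℕ × ℕ := fun z => (p - z.1, q - z.2) with hg
  have hginv : ∀ z ∈ T, g z ∈ T ∧ g (g z) = z ∧ f (g z) + f z = 2 * (p * q) := by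
    rintro ⟨x, y⟩ hz
    rw [hmemT] at hz
    obtain ⟨⟨hx0, hxp⟩, hy0, hyq⟩ := hz
    refine ⟨by rw [hmemT]; simp [hg]; omega, by simp [hg]; omega, ?_⟩
    have e1 : q * (p - x) + q * x = p * q := by
      rw [← Nat.mul_add, Nat.sub_add_cancel hxp.le, mul_comm]
    have e2 : p * (q - y) + p * y = p * q := by
      rw [← Nat.mul_add, Nat.sub_add_cancel hyq.le]
    simp only [hf, hg]
    omega
  set A : Finset (ℕ × ℕ) := T.filter (fun z => f z < p * q) with hA
  set B : Finset (ℕ × ℕ) := T.filter (fun z => ¬ f z < p * q) with hB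
  -- card A = card B
  have hAB : A.card = B.card := by
    refine Finset.card_bij' (fun z _ => g z) (fun z _ => g z) ?_ ?_ ?_ ?_
    · intro a ha
      rw [hA, Finset.mem_filter] at ha
      obtain ⟨hgT, -, hsum⟩ := hginv a ha.1
      have hane := hne a ha.1
      show g a ∈ B
      rw [hB, Finset.mem_filter]
      exact ⟨hgT, by omega⟩
    · intro a ha
      rw [hB, Finset.mem_filter] at ha
      obtain ⟨hgT, -, hsum⟩ := hginv a ha.1
      have hane := hne a ha.1
      show g a ∈ A
      rw [hA, Finset.mem_filter]
      exact ⟨hgT, by omega⟩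
    · intro a ha
      rw [hA, Finset.mem_filter] at ha
      exact (hginv a ha.1).2.1
    · intro a ha
      rw [hB, Finset.mem_filter] at ha
      exact (hginv a ha.1).2.1
  have hABsum : A.card + B.card = T.card := by
    rw [hA, hB]
    exact Finset.card_filter_add_card_filter_not _
  have hTcard : T.card = (p - 1) * (q - 1) := by
    rw [hT]
    simp [Nat.card_Ioo]
  have h2A : 2 * A.card = (p - 1) * (q - 1) := by omega
  -- the filtered set is the image of A under f
  have hS : (Finset.Ioo 0 (p * q)).filter
        (fun n => ∃ x y : ℕ, 0 < x ∧ x < p ∧ 0 < y ∧ y < q ∧ n = q * x + p * y)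
      = A.image f := by
    ext n
    simp only [Finset.mem_filter, Finset.mem_image, Finset.mem_Ioo, hA]
    constructor
    · rintro ⟨⟨hn0, hnpq⟩, x, y, hx0, hxp, hy0, hyq, rfl⟩
      exact ⟨(x, y), ⟨(hmemT _).2 ⟨⟨hx0, hxp⟩, hy0, hyq⟩, hnpq⟩, rfl⟩
    · rintro ⟨⟨x, y⟩, ⟨hzT, hlt⟩, rfl⟩
      rw [hmemT] at hzT
      obtain ⟨⟨hx0, hxp⟩, hy0, hyq⟩ := hzT
      refine ⟨⟨?_, hlt⟩, x, y, hx0, hxp, hy0, hyq, rfl⟩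
      have hqx : 0 < q * x := Nat.mul_pos hq hx0
      show 0 < q * x + p * y
      omega
  -- f is injective on A
  have hinj : Set.InjOn f ↑A := by
    rintro ⟨x1, y1⟩ hz1 ⟨x2, y2⟩ hz2 h
    have hz1' : (x1, y1) ∈ A := hz1
    have hz2' : (x2, y2) ∈ A := hz2
    rw [hA, Finset.mem_filter, hmemT] at hz1' hz2'
    replace hz1' := hz1'.1
    replace hz2' := hz2'.1
    obtain ⟨⟨hx10, hx1p⟩, hy10, hy1q⟩ := hz1'
    obtain ⟨⟨hx20, hx2p⟩, hy20, hy2q⟩ := hz2'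
    simp only [hf] at h
    have hzm : ((q : ZMod p) * x1 = (q : ZMod p) * x2) := by
      have := congrArg (fun n : ℕ => (n : ZMod p)) h
      push_cast at this
      simpa [ZMod.natCast_self] using this
    have hqunit : IsUnit (q : ZMod p) := by
      rw [ZMod.isUnit_iff_coprime]
      exact hpq.symm
    have hx12 : (x1 : ZMod p) = (x2 : ZMod p) := hqunit.mul_left_cancel hzm
    have hx : x1 = x2 := by
      have := congrArg ZMod.val hx12
      rwa [ZMod.val_cast_of_lt hx1p, ZMod.val_cast_of_lt hx2p] at this
    subst hx
    have hy : y1 = y2 := Nat.eq_of_mul_eq_mul_left hp (by omega)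
    simp [hy]
  rw [hS, Finset.card_image_of_injOn hinj]
  have hcast : ((2 * A.card : ℕ) : ℚ) = (((p - 1) * (q - 1) : ℕ) : ℚ) := by
    exact_mod_cast congrArg (Nat.cast : ℕ → ℚ) h2A
  push_cast [Nat.cast_sub hp, Nat.cast_sub hq] at hcast
  linarith
end

section
/- Let p and q be coprime positive integers and let n be an integer with 1 ≤ n ≤ pq - 1 such that p does not divide n and q does not divide n. Then exactly one of n and pq - n can be written in the form iq + jp with integers i, j > 0. -/
theorem exactly_one_representable (p q : ℕ) (hp : 0 < p) (hq : 0 < q)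
    (hpq : Nat.Coprime p q) (n : ℕ) (h1 : 1 ≤ n) (h2 : n ≤ p * q - 1)
    (hpn : ¬ p ∣ n) (hqn : ¬ q ∣ n) :
    Xor' (∃ i j : ℕ, 0 < i ∧ 0 < j ∧ n = i * q + j * p)
      (∃ i j : ℕ, 0 < i ∧ 0 < j ∧ p * q - n = i * q + j * p) := by
  haveI : NeZero p := ⟨hp.ne'⟩
  have hu : IsUnit (q : ZMod p) := (ZMod.isUnit_iff_coprime q p).mpr hpq.symm
  set i : ℕ := ((n : ZMod p) * (q : ZMod p)⁻¹).val with hidef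
  have hiq : ((i : ZMod p) * q = (n : ZMod p)) := by
    rw [hidef, ZMod.natCast_val, ZMod.cast_id, mul_assoc,
      ZMod.inv_mul_of_unit _ hu, mul_one]
  have hilt : i < p := ZMod.val_lt _
  have hipos : 0 < i := by
    rcases Nat.eq_zero_or_pos i with h0 | h
    · exfalso
      apply hpn
      have : (n : ZMod p) = 0 := by
        rw [← hiq, h0]; simp
      exact (ZMod.natCast_eq_zero_iff n p).mp this
    · exact h
  -- p ∣ i*q - n over ℤ
  have hd : (p : ℤ) ∣ (i * q : ℤ) - n := by
    have : ((i * q - n : ℤ) : ZMod p) = 0 := by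
      push_cast
      rw [hiq]; ring
    exact (ZMod.intCast_zmod_eq_zero_iff_dvd _ p).mp this
  have hcop : IsCoprime (p : ℤ) (q : ℤ) := by
    rw [Int.isCoprime_iff_gcd_eq_one, Int.gcd_natCast_natCast]
    exact hpq
  have hnlt : n < p * q := by
    have : 1 ≤ p * q := Nat.one_le_iff_ne_zero.mpr (Nat.mul_ne_zero hp.ne' hq.ne')
    omega
  rcases lt_trichotomy (i * q) n with hlt | heqc | hgt
  · -- n representable, pq - n not
    left
    constructor
    · -- n = i*q + j*p
      have hdn : p ∣ n - i * q := by
        have : (p : ℤ) ∣ ((n - i * q : ℕ) : ℤ) := by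
          rw [Nat.cast_sub hlt.le]
          push_cast
          exact dvd_sub_comm.mp hd
        exact_mod_cast this
      refine ⟨i, (n - i * q) / p, hipos, ?_, ?_⟩
      · exact Nat.div_pos (Nat.le_of_dvd (by omega) hdn) hp
      · rw [Nat.div_mul_cancel hdn]; omega
    · rintro ⟨i', j', hi', hj', heq⟩
      have hi'lt : i' < p := by
        by_contra hc
        push_neg at hc
        have : p * q ≤ i' * q := Nat.mul_le_mul_right q hc
        have hjp : p ≤ j' * p := Nat.le_mul_of_pos_left p hj'
        omega
      -- p ∣ i + i'
      have hd2 : (p : ℤ) ∣ ((i + i') * q : ℤ) := by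
        have heqz : ((p : ℤ) * q - n : ℤ) = i' * q + j' * p := by
          have := heq
          have h' : (((p * q - n : ℕ) : ℤ)) = ((i' * q + j' * p : ℕ) : ℤ) := by
            exact_mod_cast congrArg (Nat.cast : ℕ → ℤ) heq
          rw [Nat.cast_sub hnlt.le] at h'
          push_cast at h' ⊢
          linarith
        have h3 : ((i + i') * q : ℤ) = ((i * q : ℤ) - n) + (p * q - j' * p) := by
          linear_combination (-1 : ℤ) * heqz
        rw [h3]
        exact dvd_add hd (dvd_sub (dvd_mul_right _ _) (dvd_mul_left _ _))
      have hd3 : p ∣ (i + i') * q := by exact_mod_cast hd2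
      have hd4 : p ∣ i + i' := hpq.dvd_of_dvd_mul_right hd3
      have hsum : i + i' = p := by
        obtain ⟨k, hk⟩ := hd4
        rcases Nat.lt_or_ge k 2 with hk2 | hk2
        · interval_cases k <;> omega
        · have : 2 * p ≤ p * k := by nlinarith
          omega
      -- rewrite i'*q
      have hi'q : i' * q = p * q - i * q := by
        have : i' = p - i := by omega
        rw [this, Nat.sub_mul]
      have hiqle : i * q ≤ p * q := Nat.mul_le_mul_right q hilt.le
      have hjp : p ≤ j' * p := Nat.le_mul_of_pos_left p hj'
      omega
  · exact absurd (heqc ▸ dvd_mul_left q i) hqn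
  · -- pq - n representable, n not
    right
    constructor
    · have hdn : p ∣ i * q - n := by
        have : (p : ℤ) ∣ ((i * q - n : ℕ) : ℤ) := by
          rw [Nat.cast_sub hgt.le]
          push_cast
          exact hd
        exact_mod_cast this
      refine ⟨p - i, (i * q - n) / p, by omega, ?_, ?_⟩
      · exact Nat.div_pos (Nat.le_of_dvd (by omega) hdn) hp
      · rw [Nat.div_mul_cancel hdn, Nat.sub_mul]
        have hiqle : i * q ≤ p * q := Nat.mul_le_mul_right q hilt.le
        omega
    · rintro ⟨i', j', hi', hj', heq⟩
      have hi'lt : i' < p := by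
        by_contra hc
        push_neg at hc
        have : p * q ≤ i' * q := Nat.mul_le_mul_right q hc
        have hjp : p ≤ j' * p := Nat.le_mul_of_pos_left p hj'
        omega
      -- p ∣ (i - i') over ℤ, so i = i'
      have hd2 : (p : ℤ) ∣ ((i : ℤ) - i') * q := by
        have heqz : ((n : ℤ)) = i' * q + j' * p := by exact_mod_cast heq
        have : ((i : ℤ) - i') * q = ((i * q : ℤ) - n) + j' * p := by
          rw [heqz]; ring
        rw [this]
        exact dvd_add hd (dvd_mul_left _ _)
      have hd3 : (p : ℤ) ∣ (i : ℤ) - i' := hcop.dvd_of_dvd_mul_right hd2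
      have hii' : i = i' := by
        obtain ⟨t, ht⟩ := hd3
        have hpz : (0 : ℤ) < p := by exact_mod_cast hp
        have h1' : (i : ℤ) < p := by exact_mod_cast hilt
        have h2' : (i' : ℤ) < p := by exact_mod_cast hi'lt
        have ht0 : t = 0 := by nlinarith [Int.natCast_nonneg i, Int.natCast_nonneg i']
        have : (i : ℤ) = i' := by
          have : (i : ℤ) - i' = 0 := by rw [ht, ht0, mul_zero]
          linarith
        exact_mod_cast this
      rw [← hii'] at heq
      have hle : i * q ≤ n := heq ▸ Nat.le_add_right _ _
      exact absurd hgt (Nat.not_lt.mpr hle)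
end

section
/- Let p and q be coprime positive integers and let n be a positive integer less than pq that is divisible by neither p nor q. Define L(m) = {(i,j) : iq + jp = m, 0 ≤ i ≤ p, 0 ≤ j ≤ q}. Then L(n) and L(pq + n) each contain at most one element, they are not both nonempty, and at least one of them is nonempty. -/
private lemma kbnd {p k x : ℤ} (hp : 0 < p) (hx : x = p * k) (h1 : -p ≤ x) (h2 : x ≤ p) :
    k = -1 ∨ k = 0 ∨ k = 1 := by
  rcases le_or_gt k (-2) with h | h
  · exfalso; nlinarith
  rcases le_or_gt 2 k with h' | h'
  · exfalso; nlinarith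
  omega

private lemma key (p q : ℤ) (hp : 0 < p) (hq : 0 < q) (hpq : IsCoprime p q)
    (i1 j1 i2 j2 : ℤ) (h10 : 0 ≤ i1) (h1p : i1 ≤ p) (hj10 : 0 ≤ j1) (h1q : j1 ≤ q)
    (h20 : 0 ≤ i2) (h2p : i2 ≤ p) (hj20 : 0 ≤ j2) (h2q : j2 ≤ q)
    (heq : i1 * q + j1 * p = i2 * q + j2 * p) (hne : i1 * q + j1 * p ≠ p * q) :
    i1 = i2 ∧ j1 = j2 := by
  have hd : p ∣ (i2 - i1) := hpq.dvd_of_dvd_mul_right ⟨j1 - j2, by ring_nf; linarith⟩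
  obtain ⟨k, hk⟩ := hd
  rcases kbnd hp hk (by linarith) (by linarith) with h | h | h <;> subst h <;> simp at hk
  · exfalso
    have hi1 : i1 = p := by linarith
    have hi2 : i2 = 0 := by linarith
    have hj : j2 = q + j1 := by
      have h2 : j2 * p = (q + j1) * p := by
        linear_combination -heq + q * hi1 - q * hi2
      exact mul_right_cancel₀ hp.ne' h2
    have hj1 : j1 = 0 := by linarith
    apply hne
    rw [hi1, hj1]; ring
  · have hi : i1 = i2 := by linarith
    have hj : j1 = j2 := by
      refine mul_right_cancel₀ hp.ne' ?_
      linear_combination heq - q * hi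
    exact ⟨hi, hj⟩
  · exfalso
    have hi2 : i2 = p := by linarith
    have hi1 : i1 = 0 := by linarith
    have hj : j1 = q + j2 := by
      have h2 : j1 * p = (q + j2) * p := by
        linear_combination heq + q * hi2 - q * hi1
      exact mul_right_cancel₀ hp.ne' h2
    have hj2 : j2 = 0 := by linarith
    apply hne
    rw [hi1, hj, hj2]; ring

private lemma exlem (p q n : ℤ) (hp : 0 < p) (hq : 0 < q) (hpq : IsCoprime p q)
    (hn0 : 0 < n) (hn : n < p * q) :
    ∃ i j : ℤ, 0 ≤ i ∧ i ≤ p ∧ 0 ≤ j ∧ j ≤ q ∧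
      (i * q + j * p = n ∨ i * q + j * p = p * q + n) := by
  obtain ⟨a, b, hab⟩ := hpq
  set i := n * b % p with hi
  have hi0 : 0 ≤ i := Int.emod_nonneg _ hp.ne'
  have hip : i < p := Int.emod_lt_of_pos _ hp
  have hd1 : p ∣ n * b - i := by
    rw [hi, Int.emod_def]
    exact ⟨n * b / p, by ring⟩
  have hdvd : p ∣ n - i * q := by
    have h1 : n - i * q = n * a * p + (n * b - i) * q := by
      linear_combination (-n) * hab
    rw [h1]
    exact dvd_add ⟨n * a, by ring⟩ (hd1.mul_right q)
  have hiq0 : 0 ≤ i * q := mul_nonneg hi0 hq.le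
  rcases le_or_gt 0 (n - i * q) with hc | hc
  · obtain ⟨j, hj⟩ := hdvd
    refine ⟨i, j, hi0, le_of_lt hip, ?_, ?_, Or.inl (by linarith)⟩
    · exact le_of_mul_le_mul_left (by linarith : p * 0 ≤ p * j) hp
    · exact le_of_mul_le_mul_left (by linarith : p * j ≤ p * q) hp
  · have hdvd2 : p ∣ p * q + n - i * q := by
      have h2 : p * q + n - i * q = p * q + (n - i * q) := by ring
      rw [h2]; exact dvd_add ⟨q, rfl⟩ hdvd
    obtain ⟨j, hj⟩ := hdvd2
    have hiq : i * q < p * q := mul_lt_mul_of_pos_right hip hq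
    refine ⟨i, j, hi0, le_of_lt hip, ?_, ?_, Or.inr (by linarith)⟩
    · exact le_of_mul_le_mul_left (by linarith : p * 0 ≤ p * j) hp
    · exact le_of_mul_le_mul_left (by linarith : p * j ≤ p * q) hp

theorem L_sets (p q : ℕ) (hp : 0 < p) (hq : 0 < q) (hpq : Nat.Coprime p q)
    (n : ℕ) (hn0 : 0 < n) (hn : n < p * q) (hpn : ¬ p ∣ n) (hqn : ¬ q ∣ n) :
    let L : ℕ → Set (ℕ × ℕ) :=
      fun m => {ij | ij.1 ≤ p ∧ ij.2 ≤ q ∧ ij.1 * q + ij.2 * p = m}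
    (L n).Subsingleton ∧ (L (p * q + n)).Subsingleton ∧
      ¬((L n).Nonempty ∧ (L (p * q + n)).Nonempty) ∧
      ((L n).Nonempty ∨ (L (p * q + n)).Nonempty) := by
  intro L
  have hpZ : (0 : ℤ) < (p : ℤ) := by exact_mod_cast hp
  have hqZ : (0 : ℤ) < (q : ℤ) := by exact_mod_cast hq
  have hpqZ : IsCoprime (p : ℤ) (q : ℤ) := by
    rw [Int.isCoprime_iff_gcd_eq_one]
    exact_mod_cast hpq
  have hnZ : (n : ℤ) < (p : ℤ) * q := by exact_mod_cast hn
  have hn0Z : (0 : ℤ) < (n : ℤ) := by exact_mod_cast hn0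
  have hsub : ∀ m : ℕ, (m : ℤ) ≠ (p : ℤ) * q → (L m).Subsingleton := by
    intro m hm
    rintro ⟨i1, j1⟩ ⟨h1p, h1q, h1e⟩ ⟨i2, j2⟩ ⟨h2p, h2q, h2e⟩
    have heq : (i1 : ℤ) * q + (j1 : ℤ) * p = (i2 : ℤ) * q + (j2 : ℤ) * p := by
      exact_mod_cast h1e.trans h2e.symm
    have hem : (i1 : ℤ) * q + (j1 : ℤ) * p = (m : ℤ) := by exact_mod_cast h1e
    have := key (p : ℤ) (q : ℤ) hpZ hqZ hpqZ i1 j1 i2 j2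
      (by positivity) (by exact_mod_cast h1p) (by positivity) (by exact_mod_cast h1q)
      (by positivity) (by exact_mod_cast h2p) (by positivity) (by exact_mod_cast h2q)
      heq (by rw [hem]; exact hm)
    obtain ⟨e1, e2⟩ := this
    have e1' : i1 = i2 := by exact_mod_cast e1
    have e2' : j1 = j2 := by exact_mod_cast e2
    simp [e1', e2']
  refine ⟨hsub n (by intro h; exact absurd h (by linarith)), hsub (p * q + n) ?_, ?_, ?_⟩
  · push_cast
    intro h
    linarith
  · rintro ⟨⟨⟨i, j⟩, hip', hjq', hije⟩, ⟨⟨i', j'⟩, hip'', hjq'', hije'⟩⟩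
    have e1 : (i : ℤ) * q + (j : ℤ) * p = (n : ℤ) := by exact_mod_cast hije
    have e2 : (i' : ℤ) * q + (j' : ℤ) * p = (p : ℤ) * q + n := by exact_mod_cast hije'
    have hipZ : (i : ℤ) ≤ p := by exact_mod_cast hip'
    have hjqZ : (j : ℤ) ≤ q := by exact_mod_cast hjq'
    have hipZ' : (i' : ℤ) ≤ p := by exact_mod_cast hip''
    have hjqZ' : (j' : ℤ) ≤ q := by exact_mod_cast hjq''
    have hi0 : (0 : ℤ) ≤ (i : ℤ) := by positivity
    have hj0 : (0 : ℤ) ≤ (j : ℤ) := by positivity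
    have hi0' : (0 : ℤ) ≤ (i' : ℤ) := by positivity
    have hj0' : (0 : ℤ) ≤ (j' : ℤ) := by positivity
    have hd : (p : ℤ) ∣ ((i' : ℤ) - i) :=
      hpqZ.dvd_of_dvd_mul_right ⟨(q : ℤ) - j' + j, by linear_combination e2 - e1⟩
    obtain ⟨k, hk⟩ := hd
    rcases kbnd hpZ hk (by linarith) (by linarith) with h | h | h <;> subst h <;>
      simp at hk
    · -- i = p, i' = 0, then pq + jp = n < pq, contradiction
      have hiP : (i : ℤ) = p := by linarith
      rw [hiP] at e1
      have : (0 : ℤ) ≤ (j : ℤ) * p := mul_nonneg hj0 hpZ.le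
      linarith
    · -- i' = i, j' = j + q, j = 0, then q ∣ n
      have hii : (i' : ℤ) = i := by linarith
      rw [hii] at e2
      have hj' : (j' : ℤ) * p = ((j : ℤ) + q) * p := by linear_combination e2 - e1
      have hj'' : (j' : ℤ) = (j : ℤ) + q := mul_right_cancel₀ hpZ.ne' hj'
      have hjz : (j : ℤ) = 0 := by linarith
      rw [hjz] at e1
      apply hqn
      have : (q : ℤ) ∣ (n : ℤ) := ⟨i, by linarith⟩
      exact_mod_cast this
    · -- i = 0, i' = p, then j'p = n, p ∣ n
      have hiP : (i' : ℤ) = p := by linarith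
      rw [hiP] at e2
      apply hpn
      have : (p : ℤ) ∣ (n : ℤ) := ⟨j', by linarith [mul_comm (j' : ℤ) (p : ℤ)]⟩
      exact_mod_cast this
  · obtain ⟨iZ, jZ, h0i, hipZ, h0j, hjqZ, hcase⟩ :=
      exlem (p : ℤ) (q : ℤ) (n : ℤ) hpZ hqZ hpqZ hn0Z hnZ
    have hi' : (iZ.toNat : ℤ) = iZ := Int.toNat_of_nonneg h0i
    have hj' : (jZ.toNat : ℤ) = jZ := Int.toNat_of_nonneg h0j
    have hip' : iZ.toNat ≤ p := by
      have : (iZ.toNat : ℤ) ≤ (p : ℤ) := by rw [hi']; exact hipZ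
      exact_mod_cast this
    have hjq' : jZ.toNat ≤ q := by
      have : (jZ.toNat : ℤ) ≤ (q : ℤ) := by rw [hj']; exact hjqZ
      exact_mod_cast this
    rcases hcase with hc | hc
    · left
      refine ⟨(iZ.toNat, jZ.toNat), hip', hjq', ?_⟩
      have : (iZ.toNat : ℤ) * q + (jZ.toNat : ℤ) * p = (n : ℤ) := by
        rw [hi', hj']; exact hc
      exact_mod_cast this
    · right
      refine ⟨(iZ.toNat, jZ.toNat), hip', hjq', ?_⟩
      have : (iZ.toNat : ℤ) * q + (jZ.toNat : ℤ) * p = (p : ℤ) * q + n := by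
        rw [hi', hj']; exact hc
      exact_mod_cast this
end

section
/- Let d be a positive integer and let λ(t) = Σ_{i=0}^{2d} a_i t^i be a polynomial with integer coefficients satisfying the symmetry a_i = a_{2d-i} for all 0 ≤ i ≤ 2d, and suppose λ(1) is odd. Then (-1)^d · λ(1) · λ(-1) ≡ 1 (mod 4). -/
/-!
Pairing the coefficients `a i` and `a (2d - i)` writes both `λ(1)` and `(-1)^d λ(-1)` as
`a d` plus twice a sum over `i < d`; the two sums differ only by signs, so they agree mod 2 and
hence `λ(1) ≡ (-1)^d λ(-1) [ZMOD 4]`. The claim follows because an odd square is `1` mod 4.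
-/

theorem Int.neg_one_pow_modEq_one_two (n : ℕ) : (-1 : ℤ) ^ n ≡ 1 [ZMOD 2] := by
  rcases neg_one_pow_eq_or ℤ n with h | h <;> rw [h]
  rfl

def IsPalindromic {M : Type*} (n : ℕ) (a : ℕ → M) : Prop :=
  ∀ i ≤ n, a i = a (n - i)

namespace IsPalindromic

theorem sum_range_eq {M : Type*} [AddCommMonoid M] {d : ℕ} {a : ℕ → M}
    (ha : IsPalindromic (2 * d) a) :
    ∑ i ∈ Finset.range (2 * d + 1), a i = a d + 2 • ∑ i ∈ Finset.range d, a i := by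
  have hupper : ∑ i ∈ Finset.range d, a (d + 1 + i) = ∑ i ∈ Finset.range d, a i := by
    rw [← Finset.sum_range_reflect]
    refine Finset.sum_congr rfl fun i hi => ?_
    rw [Finset.mem_range] at hi
    rw [ha i (by omega)]
    congr 1
    omega
  rw [show 2 * d + 1 = d + 1 + d by omega, Finset.sum_range_add, Finset.sum_range_succ, hupper,
    two_nsmul]
  abel

theorem mul_neg_one_pow {R : Type*} [Ring R] {d : ℕ} {a : ℕ → R}
    (ha : IsPalindromic (2 * d) a) :
    IsPalindromic (2 * d) (fun i => a i * (-1) ^ (i + d)) := by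
  intro i hi
  have hparity : (2 * d - i + d) % 2 = (i + d) % 2 := by omega
  dsimp only
  rw [← ha i hi, neg_one_pow_eq_pow_mod_two (R := R) (2 * d - i + d), hparity,
    ← neg_one_pow_eq_pow_mod_two]

theorem sum_modEq_neg_one_pow_mul_alternating_sum {d : ℕ} {a : ℕ → ℤ}
    (ha : IsPalindromic (2 * d) a) :
    ∑ i ∈ Finset.range (2 * d + 1), a i ≡
      (-1) ^ d * ∑ i ∈ Finset.range (2 * d + 1), a i * (-1) ^ i [ZMOD 4] := by
  have htwist : (-1) ^ d * ∑ i ∈ Finset.range (2 * d + 1), a i * (-1) ^ i =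
      ∑ i ∈ Finset.range (2 * d + 1), a i * (-1) ^ (i + d) := by
    rw [Finset.mul_sum]
    exact Finset.sum_congr rfl fun i _ => by ring
  have hhalves : ∑ i ∈ Finset.range d, a i ≡ ∑ i ∈ Finset.range d, a i * (-1) ^ (i + d)
      [ZMOD 2] :=
    Int.ModEq.sum fun i _ => by
      simpa using (Int.neg_one_pow_modEq_one_two (i + d)).mul_left (a i) |>.symm
  rw [htwist, ha.sum_range_eq, ha.mul_neg_one_pow.sum_range_eq, ← two_mul, pow_mul, neg_one_sq,
    one_pow, mul_one, nsmul_eq_mul, Nat.cast_ofNat]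
  exact (hhalves.mul_left' (c := 2)).add_left (a d)

end IsPalindromic

theorem Int.mul_modEq_one_four_of_odd_of_modEq {x y : ℤ} (hx : Odd x) (hxy : x ≡ y [ZMOD 4]) :
    x * y ≡ 1 [ZMOD 4] :=
  calc x * y ≡ x ^ 2 [ZMOD 4] := by rw [sq]; exact hxy.symm.mul_left x
    _ ≡ 1 [ZMOD 4] := Int.sq_mod_four_eq_one_of_odd hx

theorem symmetric_poly_mod_four_general (d : ℕ) (a : ℕ → ℤ)
    (hsym : ∀ i ≤ 2 * d, a i = a (2 * d - i))
    (hodd : Odd (∑ i ∈ Finset.range (2 * d + 1), a i)) :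
    Int.ModEq 4
      ((-1 : ℤ) ^ d * (∑ i ∈ Finset.range (2 * d + 1), a i) *
        (∑ i ∈ Finset.range (2 * d + 1), a i * (-1 : ℤ) ^ i)) 1 := by
  rw [mul_comm ((-1 : ℤ) ^ d), mul_assoc]
  exact Int.mul_modEq_one_four_of_odd_of_modEq hodd
    (IsPalindromic.sum_modEq_neg_one_pow_mul_alternating_sum hsym)

theorem symmetric_poly_mod_four (d : ℕ) (hd : 0 < d) (a : ℕ → ℤ)
    (hsym : ∀ i ≤ 2 * d, a i = a (2 * d - i))
    (hodd : Odd (∑ i ∈ Finset.range (2 * d + 1), a i)) :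
    Int.ModEq 4
      ((-1 : ℤ) ^ d * (∑ i ∈ Finset.range (2 * d + 1), a i) *
        (∑ i ∈ Finset.range (2 * d + 1), a i * (-1 : ℤ) ^ i)) 1 :=
  symmetric_poly_mod_four_general d a hsym hodd
end

section
/- Let F be a field, let n ≥ 1, let Q be an invertible symmetric n × n matrix over F, and let P be an n × n matrix over F satisfying Pᵀ · Q · P = Q. Then P is invertible, and for every nonzero t ∈ F, det(P - t·I) = tⁿ · det(-P⁻¹) · det(P - t⁻¹·I). -/
/-!
From `Pᵀ Q P = Q` we get `det P ^ 2 = 1` and `Pᵀ = Q P⁻¹ Q⁻¹`, so `P - t` is, up to transposition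
and conjugation by `Q`, the matrix `P⁻¹ - t = (-t) P⁻¹ (P - t⁻¹)`. Taking determinants gives the
functional equation.
-/

namespace Matrix

variable {ι R : Type*} [Fintype ι] [DecidableEq ι]

section CommRing

variable [CommRing R] {Q P : Matrix ι ι R}

theorem isUnit_det_of_transpose_mul_mul_eq (hQ : IsUnit Q.det) (hP : Pᵀ * Q * P = Q) :
    IsUnit P.det := by
  have hdet : P.det * P.det * Q.det = 1 * Q.det := by
    simpa only [det_mul, det_transpose, one_mul, mul_right_comm] using congrArg det hP
  exact IsUnit.of_mul_eq_one _ (hQ.mul_right_cancel hdet)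

theorem transpose_eq_of_transpose_mul_mul_eq (hQ : IsUnit Q.det) (hP : Pᵀ * Q * P = Q) :
    Pᵀ = Q * P⁻¹ * Q⁻¹ := by
  have hPdet := isUnit_det_of_transpose_mul_mul_eq hQ hP
  calc Pᵀ = Pᵀ * Q * P * P⁻¹ * Q⁻¹ := by
        rw [mul_nonsing_inv_cancel_right _ _ hPdet, mul_nonsing_inv_cancel_right _ _ hQ]
    _ = Q * P⁻¹ * Q⁻¹ := by rw [hP]

theorem det_sub_smul_one_eq_det_inv_sub_smul_one (hQ : IsUnit Q.det) (hP : Pᵀ * Q * P = Q)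
    (t : R) : (P - t • (1 : Matrix ι ι R)).det = (P⁻¹ - t • (1 : Matrix ι ι R)).det := by
  have hconj : (P - t • (1 : Matrix ι ι R))ᵀ = Q * (P⁻¹ - t • 1) * Q⁻¹ := by
    rw [transpose_sub, transpose_eq_of_transpose_mul_mul_eq hQ hP, transpose_smul, transpose_one,
      mul_sub, sub_mul, Matrix.mul_smul, mul_one, smul_mul, mul_nonsing_inv _ hQ]
  rw [← det_transpose, hconj, det_conj ((isUnit_iff_isUnit_det Q).mpr hQ)]

end CommRing

variable [Field R] {P : Matrix ι ι R}

theorem inv_sub_smul_one_eq_smul_inv_mul (hP : IsUnit P.det) {t : R} (ht : t ≠ 0) :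
    P⁻¹ - t • (1 : Matrix ι ι R) = (-t) • P⁻¹ * (P - t⁻¹ • 1) := by
  rw [smul_mul, mul_sub, nonsing_inv_mul _ hP, Matrix.mul_smul, mul_one, smul_sub, smul_smul,
    neg_mul, mul_inv_cancel₀ ht]
  module

theorem det_inv_sub_smul_one (hP : IsUnit P.det) {t : R} (ht : t ≠ 0) :
    (P⁻¹ - t • (1 : Matrix ι ι R)).det =
      t ^ Fintype.card ι * (-P⁻¹).det * (P - t⁻¹ • (1 : Matrix ι ι R)).det := by
  rw [inv_sub_smul_one_eq_smul_inv_mul hP ht, det_mul, det_smul, det_neg]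
  ring

end Matrix

open Matrix in
theorem isometry_char_poly_symmetric_general (F : Type*) [Field F] (n : ℕ)
    (Q P : Matrix (Fin n) (Fin n) F) (hQ : IsUnit Q.det)
    (hP : Pᵀ * Q * P = Q) :
    IsUnit P.det ∧ ∀ t : F, t ≠ 0 →
      (P - t • (1 : Matrix (Fin n) (Fin n) F)).det =
        t ^ n * (-P⁻¹).det * (P - t⁻¹ • (1 : Matrix (Fin n) (Fin n) F)).det := by
  have hPdet := isUnit_det_of_transpose_mul_mul_eq hQ hP
  refine ⟨hPdet, fun t ht => ?_⟩
  rw [det_sub_smul_one_eq_det_inv_sub_smul_one hQ hP, det_inv_sub_smul_one hPdet ht,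
    Fintype.card_fin]

open Matrix in
theorem isometry_char_poly_symmetric (F : Type*) [Field F] (n : ℕ) (hn : 1 ≤ n)
    (Q P : Matrix (Fin n) (Fin n) F) (hQsymm : Qᵀ = Q) (hQ : IsUnit Q.det)
    (hP : Pᵀ * Q * P = Q) :
    IsUnit P.det ∧ ∀ t : F, t ≠ 0 →
      (P - t • (1 : Matrix (Fin n) (Fin n) F)).det =
        t ^ n * (-P⁻¹).det * (P - t⁻¹ • (1 : Matrix (Fin n) (Fin n) F)).det :=
  isometry_char_poly_symmetric_general F n Q P hQ hP
end
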